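/- Let 𝕊 be a nonempty finite set with m elements, and 𝔸, 𝔹 nonempty finite sets. Let S ∈ 𝕊, A ∈ 𝔸, B ∈ 𝔹, S̃ ∈ 𝕊, and M ∈ {0,1} be jointly distributed finitely-valued random variables such that (S, A, B), S̃, and M are mutually independent, S̃ is uniformly distributed on 𝕊, and P(M = 1) = P(M = 0) = 1/2. Define S̄ := S on the event {M = 1} and S̄ := S̃ on the event {M = 0}. Then for every (s, a, b) with P(S = s, A = a, B = b) > 0, the quantities w := P(M = 1 | S̄ = s, A = a, B = b) and ξ := P(M = 1 | S̄ = s, B = b) are well-defined and lie in (0,1), and the information loss satisfies log( P(S = s | A = a, B = b) / P(S = s | B = b) ) = log( w / (1 − w) ) − log( ξ / (1 − ξ) ). -/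

import Mathlib

open scoped BigOperators Classical

noncomputable section

namespace NCS

/-- Probability of an event under a pmf `P` on a finite sample space. -/
def pr {Ω : Type} [Fintype Ω] (P : Ω → ℝ) (E : Ω → Prop) : ℝ :=
  ∑ ω, if E ω then P ω else 0

/-- Conditional probability `P(E | F)`, as a ratio of probabilities. -/
def condPr {Ω : Type} [Fintype Ω] (P : Ω → ℝ) (E F : Ω → Prop) : ℝ :=
  pr P (fun ω => E ω ∧ F ω) / pr P F

/-!
On `{M = true}` the event `Sbar = s` is `S = s`, on `{M = false}` it is `St = s` with `St`
uniform. Hence, for every event `E` determined by `(S, A, B)`, independence gives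
`P(Sbar = s, E, M = true) = P(S = s, E) / 2` and `P(Sbar = s, E, M = false) = P(E) / (2 |𝕊|)`,
so the posterior odds of `M = true` given `{Sbar = s} ∩ E` equal `|𝕊| · P(S = s | E)`.
For `E = {A = a, B = b}` and `E = {B = b}` the factor `|𝕊|` cancels in the ratio of odds.
-/

section Pr

variable {Ω : Type} [Fintype Ω] (P : Ω → ℝ)

lemma pr_congr {E F : Ω → Prop} (h : ∀ ω, E ω ↔ F ω) : pr P E = pr P F :=
  Finset.sum_congr rfl fun ω _ => by simp only [h ω]

lemma pr_eq_zero_of_forall_not {E : Ω → Prop} (h : ∀ ω, ¬E ω) : pr P E = 0 := by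
  simp [pr, h]

lemma pr_mono (hP : ∀ ω, 0 ≤ P ω) {E F : Ω → Prop} (h : ∀ ω, E ω → F ω) :
    pr P E ≤ pr P F := by
  refine Finset.sum_le_sum fun ω _ => ?_
  by_cases hE : E ω
  · simp [hE, h ω hE]
  · by_cases hF : F ω <;> simp [hE, hF, hP ω]

lemma pr_eq_sum_pr_and {α : Type*} (X : Ω → α) {t : Finset α} (ht : ∀ ω, X ω ∈ t)
    (E : Ω → Prop) : pr P E = ∑ x ∈ t, pr P (fun ω => X ω = x ∧ E ω) := by
  unfold pr
  rw [Finset.sum_comm]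
  refine Finset.sum_congr rfl fun ω _ => ?_
  by_cases hE : E ω <;> simp [hE, ht ω]

lemma pr_comp_and_eq_mul {α : Type*} (X : Ω → α) (G : Ω → Prop) (c : ℝ)
    (h : ∀ x, pr P (fun ω => X ω = x ∧ G ω) = pr P (fun ω => X ω = x) * c) (Q : α → Prop) :
    pr P (fun ω => Q (X ω) ∧ G ω) = pr P (fun ω => Q (X ω)) * c := by
  have hX : ∀ ω, X ω ∈ Finset.univ.image X := fun ω => Finset.mem_image_of_mem X (Finset.mem_univ ω)
  rw [pr_eq_sum_pr_and P X hX, pr_eq_sum_pr_and P X hX, Finset.sum_mul]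
  refine Finset.sum_congr rfl fun x _ => ?_
  by_cases hQ : Q x
  · rw [pr_congr P (fun ω => show X ω = x ∧ Q (X ω) ∧ G ω ↔ X ω = x ∧ G ω by
        constructor <;> rintro ⟨rfl, h⟩ <;> simp_all),
      pr_congr P (fun ω => show X ω = x ∧ Q (X ω) ↔ X ω = x by
        constructor <;> rintro ⟨⟩ <;> simp_all), h x]
  · rw [pr_eq_zero_of_forall_not P (fun ω ⟨hx, hq, _⟩ => hQ (hx ▸ hq)),
      pr_eq_zero_of_forall_not P (fun ω ⟨hx, hq⟩ => hQ (hx ▸ hq)), zero_mul]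

def IndepOfPair {α β : Type*} (E : Ω → Prop) (X : Ω → α) (Y : Ω → β) : Prop :=
  ∀ x y, pr P (fun ω => E ω ∧ X ω = x ∧ Y ω = y) =
    pr P E * (pr P (fun ω => X ω = x) * pr P (fun ω => Y ω = y))

lemma IndepOfPair.comp {α β γ : Type*} {Z : Ω → γ} {X : Ω → α} {Y : Ω → β}
    (h : ∀ z, IndepOfPair P (fun ω => Z ω = z) X Y) (Q : γ → Prop) :
    IndepOfPair P (fun ω => Q (Z ω)) X Y := fun x y =>
  pr_comp_and_eq_mul P Z _ _ (fun z => h z x y) Q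

lemma condPr_true_mem_Ioo_and_odds (M : Ω → Bool) (F : Ω → Prop) {u v : ℝ}
    (hu : 0 < u) (hv : 0 < v) (htrue : pr P (fun ω => F ω ∧ M ω = true) = u)
    (hfalse : pr P (fun ω => F ω ∧ M ω = false) = v) :
    0 < pr P F ∧ condPr P (fun ω => M ω = true) F ∈ Set.Ioo (0 : ℝ) 1 ∧
      condPr P (fun ω => M ω = true) F / (1 - condPr P (fun ω => M ω = true) F) = u / v := by
  have hF : pr P F = u + v := by
    rw [pr_eq_sum_pr_and P M (t := Finset.univ) (fun _ => Finset.mem_univ _), Fintype.sum_bool,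
      ← htrue, ← hfalse]
    congr 1 <;> exact pr_congr P fun ω => and_comm
  have hw : condPr P (fun ω => M ω = true) F = u / (u + v) := by
    rw [condPr, hF, ← htrue, pr_congr P fun ω => and_comm]
  refine ⟨by linarith, ⟨by rw [hw]; positivity, ?_⟩, ?_⟩
  · rw [hw, div_lt_one (by positivity)]
    linarith
  · have : u + v ≠ 0 := by positivity
    rw [hw, one_sub_div this, add_sub_cancel_left, div_div_div_cancel_right₀ this]

end Pr

section Mixture

variable {Ω 𝕊 : Type} [Fintype Ω] [Fintype 𝕊] {P : Ω → ℝ} {S St Sbar : Ω → 𝕊} {M : Ω → Bool}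

lemma pr_sbar_and_true (hSbar : ∀ ω, Sbar ω = if M ω then S ω else St ω)
    (hunif : ∀ s' : 𝕊, pr P (fun ω => St ω = s') = 1 / (Fintype.card 𝕊 : ℝ))
    (hM1 : pr P (fun ω => M ω = true) = 1 / 2) (s : 𝕊) (E : Ω → Prop)
    (hind : IndepOfPair P (fun ω => S ω = s ∧ E ω) St M) :
    pr P (fun ω => (Sbar ω = s ∧ E ω) ∧ M ω = true) = pr P (fun ω => S ω = s ∧ E ω) / 2 := by
  have hcard : (Fintype.card 𝕊 : ℝ) ≠ 0 := by
    exact_mod_cast (Fintype.card_pos_iff.mpr ⟨s⟩).ne'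
  calc pr P (fun ω => (Sbar ω = s ∧ E ω) ∧ M ω = true)
      = pr P (fun ω => (S ω = s ∧ E ω) ∧ M ω = true) :=
        pr_congr P fun ω => by cases h : M ω <;> simp [hSbar ω, h]
    _ = ∑ s', pr P (fun ω => (S ω = s ∧ E ω) ∧ St ω = s' ∧ M ω = true) := by
        rw [pr_eq_sum_pr_and P St (fun _ => Finset.mem_univ _)]
        exact Finset.sum_congr rfl fun s' _ => pr_congr P fun ω => by tauto
    _ = ∑ _s' : 𝕊, pr P (fun ω => S ω = s ∧ E ω) * (1 / (Fintype.card 𝕊 : ℝ) * (1 / 2)) := by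
        simp only [hind _ true, hunif, hM1]
    _ = pr P (fun ω => S ω = s ∧ E ω) / 2 := by
        rw [Finset.sum_const, Finset.card_univ, nsmul_eq_mul]
        field_simp

lemma pr_sbar_and_false (hSbar : ∀ ω, Sbar ω = if M ω then S ω else St ω)
    (hunif : ∀ s' : 𝕊, pr P (fun ω => St ω = s') = 1 / (Fintype.card 𝕊 : ℝ))
    (hM0 : pr P (fun ω => M ω = false) = 1 / 2) (s : 𝕊) (E : Ω → Prop)
    (hind : IndepOfPair P E St M) :
    pr P (fun ω => (Sbar ω = s ∧ E ω) ∧ M ω = false) = pr P E / (2 * Fintype.card 𝕊) := by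
  rw [pr_congr P (F := fun ω => E ω ∧ St ω = s ∧ M ω = false)
      fun ω => by cases h : M ω <;> simp [hSbar ω, h, and_comm],
    hind s false, hunif, hM0]
  ring

lemma sbar_odds_eq_card_mul_condPr (hP : ∀ ω, 0 ≤ P ω)
    (hSbar : ∀ ω, Sbar ω = if M ω then S ω else St ω)
    (hunif : ∀ s' : 𝕊, pr P (fun ω => St ω = s') = 1 / (Fintype.card 𝕊 : ℝ))
    (hM1 : pr P (fun ω => M ω = true) = 1 / 2) (hM0 : pr P (fun ω => M ω = false) = 1 / 2)
    (s : 𝕊) (E : Ω → Prop) (hindS : IndepOfPair P (fun ω => S ω = s ∧ E ω) St M)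
    (hind : IndepOfPair P E St M) (hpos : 0 < pr P (fun ω => S ω = s ∧ E ω)) :
    0 < pr P (fun ω => Sbar ω = s ∧ E ω) ∧
      condPr P (fun ω => M ω = true) (fun ω => Sbar ω = s ∧ E ω) ∈ Set.Ioo (0 : ℝ) 1 ∧
      condPr P (fun ω => M ω = true) (fun ω => Sbar ω = s ∧ E ω) /
          (1 - condPr P (fun ω => M ω = true) (fun ω => Sbar ω = s ∧ E ω)) =
        Fintype.card 𝕊 * condPr P (fun ω => S ω = s) E := by
  have hcard : (0 : ℝ) < Fintype.card 𝕊 := by exact_mod_cast Fintype.card_pos_iff.mpr ⟨s⟩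
  have hE : 0 < pr P E := hpos.trans_le (pr_mono P hP fun ω h => h.2)
  obtain ⟨hF, hw, hodds⟩ := condPr_true_mem_Ioo_and_odds P M _ (by positivity) (by positivity)
    (pr_sbar_and_true hSbar hunif hM1 s E hindS) (pr_sbar_and_false hSbar hunif hM0 s E hind)
  refine ⟨hF, hw, hodds.trans ?_⟩
  rw [condPr]
  field_simp

end Mixture

theorem information_loss_via_binary_classification_general
    {Ω 𝕊 𝔸 𝔹 : Type} [Fintype Ω] [Fintype 𝕊]
    (P : Ω → ℝ) (hP : ∀ ω, 0 ≤ P ω)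
    (S : Ω → 𝕊) (A : Ω → 𝔸) (B : Ω → 𝔹) (St : Ω → 𝕊) (M : Ω → Bool)
    (hindep : ∀ (s : 𝕊) (a : 𝔸) (b : 𝔹) (s' : 𝕊) (m : Bool),
      pr P (fun ω => (S ω = s ∧ A ω = a ∧ B ω = b) ∧ St ω = s' ∧ M ω = m) =
        pr P (fun ω => S ω = s ∧ A ω = a ∧ B ω = b) * pr P (fun ω => St ω = s') *
          pr P (fun ω => M ω = m))
    (hunif : ∀ s' : 𝕊, pr P (fun ω => St ω = s') = 1 / (Fintype.card 𝕊 : ℝ))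
    (hM1 : pr P (fun ω => M ω = true) = 1 / 2)
    (hM0 : pr P (fun ω => M ω = false) = 1 / 2)
    (Sbar : Ω → 𝕊) (hSbar : ∀ ω, Sbar ω = if M ω then S ω else St ω) :
    ∀ (s : 𝕊) (a : 𝔸) (b : 𝔹),
      0 < pr P (fun ω => S ω = s ∧ A ω = a ∧ B ω = b) →
      0 < pr P (fun ω => Sbar ω = s ∧ A ω = a ∧ B ω = b) ∧
      0 < pr P (fun ω => Sbar ω = s ∧ B ω = b) ∧
      condPr P (fun ω => M ω = true) (fun ω => Sbar ω = s ∧ A ω = a ∧ B ω = b) ∈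
        Set.Ioo (0 : ℝ) 1 ∧
      condPr P (fun ω => M ω = true) (fun ω => Sbar ω = s ∧ B ω = b) ∈
        Set.Ioo (0 : ℝ) 1 ∧
      Real.log (condPr P (fun ω => S ω = s) (fun ω => A ω = a ∧ B ω = b) /
          condPr P (fun ω => S ω = s) (fun ω => B ω = b)) =
        Real.log
          (condPr P (fun ω => M ω = true) (fun ω => Sbar ω = s ∧ A ω = a ∧ B ω = b) /
           (1 - condPr P (fun ω => M ω = true)
              (fun ω => Sbar ω = s ∧ A ω = a ∧ B ω = b))) -
        Real.log
          (condPr P (fun ω => M ω = true) (fun ω => Sbar ω = s ∧ B ω = b) /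
           (1 - condPr P (fun ω => M ω = true) (fun ω => Sbar ω = s ∧ B ω = b))) := by
  intro s a b hsab
  have hind : ∀ Q : 𝕊 × 𝔸 × 𝔹 → Prop, IndepOfPair P (fun ω => Q (S ω, A ω, B ω)) St M :=
    IndepOfPair.comp P fun ⟨s, a, b⟩ s' m => by
      have hz : ∀ ω, (S ω, A ω, B ω) = (s, a, b) ↔ S ω = s ∧ A ω = a ∧ B ω = b :=
        fun ω => by simp only [Prod.mk.injEq]
      dsimp only
      rw [pr_congr P hz, ← mul_assoc, ← hindep]
      exact pr_congr P fun ω => by rw [hz]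
  have hsb : 0 < pr P (fun ω => S ω = s ∧ B ω = b) :=
    hsab.trans_le (pr_mono P hP fun ω h => ⟨h.1, h.2.2⟩)
  obtain ⟨hpos_ab, hw, hodds_w⟩ := sbar_odds_eq_card_mul_condPr hP hSbar hunif hM1 hM0 s
    (fun ω => A ω = a ∧ B ω = b) (hind fun z => z.1 = s ∧ z.2.1 = a ∧ z.2.2 = b)
    (hind fun z => z.2.1 = a ∧ z.2.2 = b) hsab
  obtain ⟨hpos_b, hξ, hodds_ξ⟩ := sbar_odds_eq_card_mul_condPr hP hSbar hunif hM1 hM0 s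
    (fun ω => B ω = b) (hind fun z => z.1 = s ∧ z.2.2 = b) (hind fun z => z.2.2 = b) hsb
  refine ⟨hpos_ab, hpos_b, hw, hξ, ?_⟩
  have hw_odds : (0 : ℝ) < _ := div_pos hw.1 (sub_pos.2 hw.2)
  have hξ_odds : (0 : ℝ) < _ := div_pos hξ.1 (sub_pos.2 hξ.2)
  rw [hodds_w] at hw_odds ⊢
  rw [hodds_ξ] at hξ_odds ⊢
  have hcard : (Fintype.card 𝕊 : ℝ) ≠ 0 := by exact_mod_cast (Fintype.card_pos_iff.mpr ⟨s⟩).ne'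
  rw [← Real.log_div hw_odds.ne' hξ_odds.ne', mul_div_mul_left _ _ hcard]

/-- Information loss via two binary classifications: if
`(S, A, B)`, `S̃`, `M` are mutually independent, `S̃` is uniform on `𝕊`,
`P(M = 1) = P(M = 0) = 1/2`, and `S̄ = S` on `{M = 1}`, `S̄ = S̃` on `{M = 0}`,
then for every `(s, a, b)` with `P(S = s, A = a, B = b) > 0` the quantities
`w = P(M = 1 | S̄ = s, A = a, B = b)` and `ξ = P(M = 1 | S̄ = s, B = b)` are
well-defined, lie in `(0,1)`, and
`log( P(S = s | A = a, B = b) / P(S = s | B = b) )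
  = log( w / (1 − w) ) − log( ξ / (1 − ξ) )`. -/
theorem information_loss_via_binary_classification
    {Ω 𝕊 𝔸 𝔹 : Type} [Fintype Ω] [Nonempty Ω] [Fintype 𝕊] [Nonempty 𝕊]
    [Fintype 𝔸] [Nonempty 𝔸] [Fintype 𝔹] [Nonempty 𝔹]
    (P : Ω → ℝ) (hP : ∀ ω, 0 ≤ P ω) (hPsum : ∑ ω, P ω = 1)
    (S : Ω → 𝕊) (A : Ω → 𝔸) (B : Ω → 𝔹) (St : Ω → 𝕊) (M : Ω → Bool)
    (hindep : ∀ (s : 𝕊) (a : 𝔸) (b : 𝔹) (s' : 𝕊) (m : Bool),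
      pr P (fun ω => (S ω = s ∧ A ω = a ∧ B ω = b) ∧ St ω = s' ∧ M ω = m) =
        pr P (fun ω => S ω = s ∧ A ω = a ∧ B ω = b) * pr P (fun ω => St ω = s') *
          pr P (fun ω => M ω = m))
    (hunif : ∀ s' : 𝕊, pr P (fun ω => St ω = s') = 1 / (Fintype.card 𝕊 : ℝ))
    (hM1 : pr P (fun ω => M ω = true) = 1 / 2)
    (hM0 : pr P (fun ω => M ω = false) = 1 / 2)
    (Sbar : Ω → 𝕊) (hSbar : ∀ ω, Sbar ω = if M ω then S ω else St ω) :
    ∀ (s : 𝕊) (a : 𝔸) (b : 𝔹),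
      0 < pr P (fun ω => S ω = s ∧ A ω = a ∧ B ω = b) →
      0 < pr P (fun ω => Sbar ω = s ∧ A ω = a ∧ B ω = b) ∧
      0 < pr P (fun ω => Sbar ω = s ∧ B ω = b) ∧
      condPr P (fun ω => M ω = true) (fun ω => Sbar ω = s ∧ A ω = a ∧ B ω = b) ∈
        Set.Ioo (0 : ℝ) 1 ∧
      condPr P (fun ω => M ω = true) (fun ω => Sbar ω = s ∧ B ω = b) ∈
        Set.Ioo (0 : ℝ) 1 ∧
      Real.log (condPr P (fun ω => S ω = s) (fun ω => A ω = a ∧ B ω = b) /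
          condPr P (fun ω => S ω = s) (fun ω => B ω = b)) =
        Real.log
          (condPr P (fun ω => M ω = true) (fun ω => Sbar ω = s ∧ A ω = a ∧ B ω = b) /
           (1 - condPr P (fun ω => M ω = true)
              (fun ω => Sbar ω = s ∧ A ω = a ∧ B ω = b))) -
        Real.log
          (condPr P (fun ω => M ω = true) (fun ω => Sbar ω = s ∧ B ω = b) /
           (1 - condPr P (fun ω => M ω = true) (fun ω => Sbar ω = s ∧ B ω = b))) :=
  information_loss_via_binary_classification_general P hP S A B St M hindep hunif hM1 hM0 Sbar hSbar

end NCS
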